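/- For positive integers n, p, k with 1 ≤ k ≤ n and 1 ≤ p ≤ n, the recurrence (n-p+1)·B(n,p-1,k) - p·B(n,p,k) = (n/(n-1))·(n-2p+1)·B(n-1,p-1,k) holds, where B(n,p,k) = (n/k) · Σ_{r≥0} C(p,r)·C(n-p,r)·C(n-r-1,k-r-1). -/

import Mathlib

/-!
Write `B n p k = (n / k) · Σ_r T(n, p, k, r)`. Since `n/(n-1) · (n-1)/k = n/k`, the recurrence is
`n/k` times the sum identity
`(n-p+1) Σ T(n,p-1,k,·) - p Σ T(n,p,k,·) = (n-2p+1) Σ T(n-1,p-1,k,·)`,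
which is proved in Wilf–Zeilberger fashion: the corresponding combination of summands equals
`G(r+1) - G(r)` for `G(r) = (n-2p+1) C(p-1,r-1) C(n-p,r-1) C(n-r-1,k-r-1)`, so the sum telescopes
to `0`. The termwise identity follows from Pascal's rule on each factor and a contiguous relation
linking `C(a,r) C(c,r-1)`, `C(a,r-1) C(c,r)` and `C(a,r-1) C(c,r-1)`, itself a consequence of the
absorption identity `(b+1) C(a,b+1) = (a-b) C(a,b)`.
-/

open Finset

/-- Binomial coefficient `C(a,b)` for integers, with `C(a,b) = 0` unless `0 ≤ b ≤ a`. -/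
def C (a b : ℤ) : ℚ := if 0 ≤ b ∧ b ≤ a then (Nat.choose a.toNat b.toNat : ℚ) else 0

/-- `B(n,p,k) = (n/k) · Σ_{r≥0} C(p,r)·C(n-p,r)·C(n-r-1,k-r-1)`. -/
def B (n p k : ℕ) : ℚ :=
  ((n : ℚ) / k) * ∑ r ∈ range (n + 1),
    C p r * C ((n : ℤ) - p) r * C ((n : ℤ) - r - 1) ((k : ℤ) - r - 1)

theorem C_eq_zero_of_neg {a b : ℤ} (h : b < 0) : C a b = 0 := if_neg (by omega)

theorem C_eq_zero_of_lt {a b : ℤ} (h : a < b) : C a b = 0 := if_neg (by omega)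

theorem C_eq_zero_of_neg_left {a b : ℤ} (h : a < 0) : C a b = 0 := if_neg (by omega)

theorem C_natCast (a b : ℕ) : C a b = a.choose b := by
  unfold C
  split_ifs with h
  · simp
  · simp [Nat.choose_eq_zero_of_lt (show a < b by omega)]

theorem C_add_one {a : ℤ} (b : ℤ) (ha : a ≠ -1) : C (a + 1) b = C a b + C a (b - 1) := by
  rcases lt_or_ge a 0 with ha' | ha'
  · simp only [C_eq_zero_of_neg_left ha', C_eq_zero_of_neg_left (show a + 1 < 0 by omega),
      add_zero]
  lift a to ℕ using ha'
  rcases lt_trichotomy b 0 with hb | rfl | hb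
  · simp [C_eq_zero_of_neg hb, C_eq_zero_of_neg (show b - 1 < 0 by omega)]
  · simp [C]
    omega
  · obtain ⟨b, rfl⟩ : ∃ c : ℕ, b = c + 1 := ⟨(b - 1).toNat, by omega⟩
    rw [add_sub_cancel_right, ← Nat.cast_succ, ← Nat.cast_succ, C_natCast, C_natCast, C_natCast,
      Nat.choose_succ_succ', Nat.cast_add, add_comm]

theorem C_succ_right_mul (a b : ℤ) : C a (b + 1) * (b + 1) = C a b * (a - b) := by
  rcases lt_or_ge b 0 with hb | hb
  · rcases eq_or_lt_of_le (show b + 1 ≤ 0 by omega) with h | h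
    · simp [C_eq_zero_of_neg hb, show (b : ℚ) + 1 = 0 by exact_mod_cast h]
    · simp [C_eq_zero_of_neg hb, C_eq_zero_of_neg h]
  rcases lt_or_ge a b with hab | hab
  · simp [C_eq_zero_of_lt hab, C_eq_zero_of_lt (show a < b + 1 by omega)]
  lift b to ℕ using hb
  lift a to ℕ using by omega
  have h := congrArg (Nat.cast : ℕ → ℚ) (Nat.choose_succ_right_eq a b)
  push_cast [Nat.cast_sub (show b ≤ a by omega)] at h
  rw [← Nat.cast_succ, C_natCast, C_natCast]
  push_cast
  exact h

theorem C_contiguous (a c r : ℤ) :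
    (c + 1 : ℚ) * C a r * C c (r - 1) - (a + 1 : ℚ) * C a (r - 1) * C c r
      + (c - a : ℚ) * C a (r - 1) * C c (r - 1) = 0 := by
  rcases eq_or_ne r 0 with rfl | hr
  · simp [C_eq_zero_of_neg (show (-1 : ℤ) < 0 by norm_num)]
  have ha := C_succ_right_mul a (r - 1)
  have hc := C_succ_right_mul c (r - 1)
  rw [sub_add_cancel] at ha hc
  push_cast at ha hc
  apply mul_left_cancel₀ (show (r : ℚ) ≠ 0 by exact_mod_cast hr)
  linear_combination (c + 1 : ℚ) * C c (r - 1) * ha - (a + 1 : ℚ) * C a (r - 1) * hc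

namespace B

def summand (n p k r : ℤ) : ℚ := C p r * C (n - p) r * C (n - r - 1) (k - r - 1)

theorem eq_mul_sum_summand (n p k : ℕ) :
    B n p k = n / k * ∑ r ∈ range (n + 1), summand n p k r := rfl

def certificate (n p k r : ℤ) : ℚ :=
  (n - 2 * p + 1 : ℚ) * C (p - 1) (r - 1) * C (n - p) (r - 1) * C (n - r - 1) (k - r - 1)

theorem summand_recurrence {n p : ℤ} (k r : ℤ) (hp : 1 ≤ p) (hpn : p ≤ n) (hn : 2 ≤ n) :
    (n - p + 1 : ℚ) * summand n (p - 1) k r - p * summand n p k r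
      - (n - 2 * p + 1 : ℚ) * summand (n - 1) (p - 1) k r
      = certificate n p k (r + 1) - certificate n p k r := by
  unfold summand certificate
  rw [show n - (p - 1) = n - p + 1 by ring, show n - 1 - (p - 1) = n - p by ring,
    show n - 1 - r - 1 = n - r - 2 by ring, show n - (r + 1) - 1 = n - r - 2 by ring,
    show k - (r + 1) - 1 = k - r - 2 by ring, add_sub_cancel_right]
  have hpascal_p : C p r = C (p - 1) r + C (p - 1) (r - 1) := by
    simpa using C_add_one r (show p - 1 ≠ -1 by omega)
  have hpascal_np := C_add_one r (show n - p ≠ -1 by omega)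
  have hpascal_third : C (p - 1) r * C (n - p) r
      * (C (n - r - 1) (k - r - 1) - C (n - r - 2) (k - r - 1) - C (n - r - 2) (k - r - 2))
      = 0 := by
    by_cases hr : r = n - 1
    -- Pascal's rule may fail here, but `r` exceeds `p - 1` or `n - p`, whose sum is `r < 2r`.
    · rcases lt_or_ge (p - 1) r with h | h
      · rw [C_eq_zero_of_lt h, zero_mul, zero_mul]
      · rw [C_eq_zero_of_lt (show n - p < r by omega), mul_zero, zero_mul]
    · have h := C_add_one (k - r - 1) (show n - r - 2 ≠ -1 by omega)
      rw [show n - r - 2 + 1 = n - r - 1 by ring, show k - r - 1 - 1 = k - r - 2 by ring] at h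
      rw [h]
      ring
  have hcontiguous := C_contiguous (p - 1) (n - p) r
  push_cast at hcontiguous
  rw [hpascal_p, hpascal_np]
  linear_combination C (n - r - 1) (k - r - 1) * hcontiguous
    + (n - 2 * p + 1 : ℚ) * hpascal_third

theorem sum_summand_recurrence {n p : ℕ} (k : ℕ) (hp : 1 ≤ p) (hpn : p ≤ n) (hn : 2 ≤ n) :
    ((n : ℚ) - p + 1) * ∑ r ∈ range (n + 1), summand n (p - 1) k r
      - p * ∑ r ∈ range (n + 1), summand n p k r
      = ((n : ℚ) - 2 * p + 1) * ∑ r ∈ range n, summand (n - 1) (p - 1) k r := by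
  have htelescope := sum_range_sub (fun r : ℕ => certificate n p k r) (n + 1)
  have hcertificate_zero : certificate n p k 0 = 0 := by
    rw [certificate, C_eq_zero_of_neg (by omega), mul_zero, zero_mul, zero_mul]
  have hcertificate_top : certificate n p k (n + 1) = 0 := by
    rw [certificate, C_eq_zero_of_lt (by omega), mul_zero, zero_mul, zero_mul]
  have hsummand_top : summand (n - 1) (p - 1) k n = 0 := by
    rw [summand, C_eq_zero_of_lt (by omega), zero_mul, zero_mul]
  push_cast at htelescope hcertificate_zero
  simp only [← summand_recurrence (n := n) (p := p) k _ (mod_cast hp) (mod_cast hpn)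
      (mod_cast hn), hcertificate_zero, hcertificate_top, sum_sub_distrib, ← mul_sum]
    at htelescope
  rw [← add_zero (∑ r ∈ range n, _), ← hsummand_top, ← sum_range_succ]
  push_cast at htelescope
  linear_combination htelescope

end B

theorem stmt_10_general (n p k : ℕ) (hp : 1 ≤ p) (hpn : p ≤ n)
    (hn : 2 ≤ n) :
    ((n : ℚ) - p + 1) * B n (p - 1) k - (p : ℚ) * B n p k =
      ((n : ℚ) / ((n : ℚ) - 1)) * ((n : ℚ) - 2 * p + 1) * B (n - 1) (p - 1) k := by
  have hcancel : (n : ℚ) / (n - 1) * (n - 1) = n :=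
    div_mul_cancel₀ _ (sub_ne_zero.mpr (by exact_mod_cast (show n ≠ 1 by omega)))
  rw [B.eq_mul_sum_summand, B.eq_mul_sum_summand, B.eq_mul_sum_summand,
    Nat.sub_add_cancel (by omega)]
  push_cast [Nat.cast_sub hp, Nat.cast_sub (show 1 ≤ n by omega)]
  linear_combination (n / k : ℚ) * B.sum_summand_recurrence k hp hpn hn
    - ((n - 2 * p + 1) / k * ∑ r ∈ range n, B.summand (n - 1) (p - 1) k r) * hcancel

theorem stmt_10 (n p k : ℕ) (hk : 1 ≤ k) (hkn : k ≤ n) (hp : 1 ≤ p) (hpn : p ≤ n)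
    (hn : 2 ≤ n) :
    ((n : ℚ) - p + 1) * B n (p - 1) k - (p : ℚ) * B n p k =
      ((n : ℚ) / ((n : ℚ) - 1)) * ((n : ℚ) - 2 * p + 1) * B (n - 1) (p - 1) k :=
  stmt_10_general n p k hp hpn hn
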